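/- The full SPINT map is permutation-invariant: if E is a row-wise embedding map (row i of E(X^C) depends only on row i of X^C via a fixed function f), then for every permutation matrix P, CrossAttn(Q, P X + E(P X^C)) = CrossAttn(Q, X + E(X^C)). -/

import Mathlib

open Matrix

noncomputable def softmax {m n : ℕ} (A : Matrix (Fin m) (Fin n) ℝ) :
    Matrix (Fin m) (Fin n) ℝ :=
  Matrix.of fun i j => Real.exp (A i j) / ∑ k, Real.exp (A i k)

noncomputable def crossAttn {B N W : ℕ} (d : ℝ) (Q : Matrix (Fin B) (Fin W) ℝ)
    (WK WV : Matrix (Fin W) (Fin W) ℝ) (Z : Matrix (Fin N) (Fin W) ℝ) :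
    Matrix (Fin B) (Fin W) ℝ :=
  softmax ((Real.sqrt d)⁻¹ • (Q * (Z * WK)ᵀ)) * (Z * WV)

/-! Multiplying by `P` permutes the rows of `X` and `X^C`, and a row-wise embedding commutes
with that, so the attention input `Z = X + E(X^C)` is only row-permuted. Permuting the rows of
`Z` permutes the columns of the score matrix, softmax is equivariant under column
permutations, and the product with the equally permuted values `Z W_V` sums over the
permuted index, so the output does not change. -/

theorem softmax_submatrix_id_equiv {m n : ℕ} (A : Matrix (Fin m) (Fin n) ℝ)
    (σ : Equiv.Perm (Fin n)) :
    softmax (A.submatrix id σ) = (softmax A).submatrix id σ := by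
  ext i j
  simp only [softmax, of_apply, submatrix_apply, id]
  rw [Equiv.sum_comp σ fun k => Real.exp (A i k)]

theorem crossAttn_submatrix_equiv_id {B N W : ℕ} (d : ℝ) (Q : Matrix (Fin B) (Fin W) ℝ)
    (WK WV : Matrix (Fin W) (Fin W) ℝ) (Z : Matrix (Fin N) (Fin W) ℝ)
    (σ : Equiv.Perm (Fin N)) :
    crossAttn d Q WK WV (Z.submatrix σ id) = crossAttn d Q WK WV Z := by
  have hrows : ∀ M : Matrix (Fin W) (Fin W) ℝ, Z.submatrix σ id * M = (Z * M).submatrix σ id :=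
    fun M => (submatrix_mul Z M σ id id Function.bijective_id).symm
  have hcols : ∀ K : Matrix (Fin W) (Fin N) ℝ, Q * K.submatrix id σ = (Q * K).submatrix id σ :=
    fun K => (submatrix_mul Q K id id σ Function.bijective_id).symm
  have hscores : (Real.sqrt d)⁻¹ • (Q * (Z.submatrix σ id * WK)ᵀ)
      = ((Real.sqrt d)⁻¹ • (Q * (Z * WK)ᵀ)).submatrix id σ := by
    rw [hrows, transpose_submatrix, hcols]
    rfl
  rw [crossAttn, crossAttn, hscores, softmax_submatrix_id_equiv, hrows, submatrix_mul_equiv,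
    submatrix_id_id]

theorem submatrix_id_of_forall_row_eq {m n p : Type*} {α β : Type*}
    (f : (n → α) → (p → β)) (E : Matrix m n α → Matrix m p β)
    (hE : ∀ M i, E M i = f (M i)) (M : Matrix m n α) (σ : m → m) :
    E (M.submatrix σ id) = (E M).submatrix σ id := by
  ext i j
  rw [hE, submatrix_apply, hE]
  rfl

theorem spint_perm_invariant_general (B N W T : ℕ) (d : ℝ)
    (Q : Matrix (Fin B) (Fin W) ℝ) (WK WV : Matrix (Fin W) (Fin W) ℝ)
    (f : (Fin T → ℝ) → (Fin W → ℝ))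
    (E : Matrix (Fin N) (Fin T) ℝ → Matrix (Fin N) (Fin W) ℝ)
    (hE : ∀ XC i, E XC i = f (XC i))
    (X : Matrix (Fin N) (Fin W) ℝ) (XC : Matrix (Fin N) (Fin T) ℝ)
    (π : Equiv.Perm (Fin N)) (P : Matrix (Fin N) (Fin N) ℝ)
    (hP : ∀ i k, P i k = if k = π i then 1 else 0) :
    crossAttn d Q WK WV (P * X + E (P * XC)) =
      crossAttn d Q WK WV (X + E XC) := by
  have hPperm : P = π.toPEquiv.toMatrix := by
    ext i k
    simp [hP, PEquiv.toMatrix_apply, eq_comm]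
  rw [hPperm, PEquiv.toMatrix_toPEquiv_mul, PEquiv.toMatrix_toPEquiv_mul,
    submatrix_id_of_forall_row_eq f E hE]
  exact crossAttn_submatrix_equiv_id d Q WK WV (X + E XC) π

/-- The full SPINT map is permutation-invariant: if `E` is a row-wise embedding
map (row `i` of `E(X^C)` is `f` of row `i` of `X^C`), then for every
permutation matrix `P`,
`CrossAttn(Q, P X + E(P X^C)) = CrossAttn(Q, X + E(X^C))`. -/
theorem spint_perm_invariant (B N W T : ℕ) (d : ℝ) (hd : 0 < d)
    (Q : Matrix (Fin B) (Fin W) ℝ) (WK WV : Matrix (Fin W) (Fin W) ℝ)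
    (f : (Fin T → ℝ) → (Fin W → ℝ))
    (E : Matrix (Fin N) (Fin T) ℝ → Matrix (Fin N) (Fin W) ℝ)
    (hE : ∀ XC i, E XC i = f (XC i))
    (X : Matrix (Fin N) (Fin W) ℝ) (XC : Matrix (Fin N) (Fin T) ℝ)
    (π : Equiv.Perm (Fin N)) (P : Matrix (Fin N) (Fin N) ℝ)
    (hP : ∀ i k, P i k = if k = π i then 1 else 0) :
    crossAttn d Q WK WV (P * X + E (P * XC)) =
      crossAttn d Q WK WV (X + E XC) :=
  spint_perm_invariant_general B N W T d Q WK WV f E hE X XC π P hP
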